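/- A numerical semigroup S is a non proper half-line semigroup, i.e., S = {0} ∪ {k ∈ ℕ : k ≥ m} for some integer m > 1, if and only if there exists a real interval [p,q] with p > 1 such that S = S([p,q]) and S = S([p,q']) for all q' ≥ q. -/

import Mathlib

/-!
Every element of `𝒮([p,q])` is `0` or at least `p`, and for `q` large every integer `n ≥ ⌈p⌉`
already lies in `[p,q]`, so a stable `𝒮([p,q])` is the half-line semigroup of `⌈p⌉`. Conversely,
for `m ≤ n` and `k = ⌊n/m⌋` the point `n/k` lies in `[m, 2m]`, so `𝒮([m,q]) = {0} ∪ [m,∞)` as soon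
as `q ≥ 2m`.
-/

/-- The numerical semigroup `𝒮(I) = ⋃_{k∈ℕ} k·I ∩ ℕ` generated by a real interval `I`. -/
def NSet (I : Set ℝ) : Set ℕ := {m | ∃ k : ℕ, ∃ r ∈ I, (m : ℝ) = (k : ℝ) * r}

open Set

lemma zero_mem_NSet {I : Set ℝ} (hI : I.Nonempty) : 0 ∈ NSet I :=
  let ⟨r, hr⟩ := hI
  ⟨0, r, hr, by simp⟩

lemma natCast_mem_NSet {I : Set ℝ} {n : ℕ} (hn : (n : ℝ) ∈ I) : n ∈ NSet I :=
  ⟨1, n, hn, by simp⟩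

lemma eq_zero_or_le_of_mem_NSet_Icc {p q : ℝ} (hp : 0 ≤ p) {n : ℕ} (hn : n ∈ NSet (Icc p q)) :
    n = 0 ∨ p ≤ n := by
  obtain ⟨k, r, ⟨hpr, -⟩, hnkr⟩ := hn
  rcases Nat.eq_zero_or_pos k with rfl | hk
  · left
    simpa using hnkr
  · right
    calc p ≤ r := hpr
      _ = 1 * r := (one_mul r).symm
      _ ≤ k * r := mul_le_mul_of_nonneg_right (by exact_mod_cast hk) (hp.trans hpr)
      _ = n := hnkr.symm

lemma mem_NSet_Icc_of_le {m n : ℕ} (hm : 0 < m) (hmn : m ≤ n) {q : ℝ} (hq : 2 * (m : ℝ) ≤ q) :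
    n ∈ NSet (Icc (m : ℝ) q) := by
  have hk : 0 < n / m := Nat.div_pos hmn hm
  have hkm : n / m * m ≤ n := Nat.div_mul_le_self n m
  have hn2km : n ≤ n / m * (2 * m) := by
    have := Nat.div_add_mod n m
    have := Nat.mod_lt n hm
    nlinarith
  set k := n / m
  have hk' : (0 : ℝ) < k := by exact_mod_cast hk
  refine ⟨k, n / k, ⟨?_, ?_⟩, by field_simp⟩
  · rw [le_div_iff₀ hk', mul_comm]
    exact_mod_cast hkm
  · rw [div_le_iff₀ hk']
    calc (n : ℝ) ≤ k * (2 * m) := by exact_mod_cast hn2km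
      _ ≤ k * q := by gcongr
      _ = q * k := mul_comm _ _

lemma NSet_Icc_natCast_eq {m : ℕ} (hm : 0 < m) {q : ℝ} (hq : 2 * (m : ℝ) ≤ q) :
    NSet (Icc (m : ℝ) q) = {0} ∪ {n : ℕ | m ≤ n} := by
  refine Subset.antisymm (fun n hn => ?_) ?_
  · simpa using eq_zero_or_le_of_mem_NSet_Icc (Nat.cast_nonneg m) hn
  · rintro n (rfl | hn)
    · exact zero_mem_NSet ⟨m, left_mem_Icc.2 (by linarith [m.cast_nonneg (α := ℝ)])⟩
    · exact mem_NSet_Icc_of_le hm hn hq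

theorem stmt8_general (S : Set ℕ) :
    (∃ m : ℕ, 1 < m ∧ S = {0} ∪ {k : ℕ | m ≤ k}) ↔
    (∃ p q : ℝ, 1 < p ∧ p ≤ q ∧ S = NSet (Set.Icc p q) ∧
      ∀ q' : ℝ, q ≤ q' → S = NSet (Set.Icc p q')) := by
  constructor
  · rintro ⟨m, hm, rfl⟩
    have hm' : (1 : ℝ) < m := by exact_mod_cast hm
    refine ⟨m, 2 * m, hm', by linarith, (NSet_Icc_natCast_eq (by omega) le_rfl).symm,
      fun q' hq' => (NSet_Icc_natCast_eq (by omega) hq').symm⟩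
  · rintro ⟨p, q, hp, hpq, hS, hS'⟩
    refine ⟨⌈p⌉₊, Nat.lt_ceil.2 (by exact_mod_cast hp), Subset.antisymm ?_ ?_⟩
    · intro n hn
      rw [hS] at hn
      simpa [Nat.ceil_le] using eq_zero_or_le_of_mem_NSet_Icc (by linarith) hn
    · rintro n (rfl | hn)
      · rw [hS]
        exact zero_mem_NSet ⟨p, left_mem_Icc.2 hpq⟩
      · rw [hS' (max q n) (le_max_left _ _)]
        exact natCast_mem_NSet ⟨Nat.ceil_le.1 hn, le_max_right _ _⟩

/-- **Lemma.** A numerical semigroup `S` is a non proper half-line semigroup, i.e.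
`S = {0} ∪ [m,∞) ∩ ℕ` for some integer `m > 1`, if and only if there is an interval `[p,q]`
with `p > 1` such that `S = 𝒮([p,q])` and `S = 𝒮([p,q'])` for all `q' ≥ q`. -/
theorem stmt8 (S : Set ℕ) (h0 : 0 ∈ S) (hadd : ∀ a ∈ S, ∀ b ∈ S, a + b ∈ S)
    (hfin : Sᶜ.Finite) :
    (∃ m : ℕ, 1 < m ∧ S = {0} ∪ {k : ℕ | m ≤ k}) ↔
    (∃ p q : ℝ, 1 < p ∧ p ≤ q ∧ S = NSet (Set.Icc p q) ∧
      ∀ q' : ℝ, q ≤ q' → S = NSet (Set.Icc p q')) :=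
  stmt8_general S
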